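/- arXiv:2303.07822 — 8 statements merged into one kernel-verified Lean document; each statement's English description precedes it below -/
import Mathlib

section
/- Let (Ω, F, μ) be a probability space, n, k positive integers, and G : Ω → (real n × k matrices) a measurable map such that G(ω)ᵀG(ω) is invertible for every ω. Let ν be the uniform probability measure on {−1,1}ⁿ. Assume the pushforward of μ under G equals the pushforward of the product measure μ ⊗ ν under (ω, s) ↦ D_s · G(ω) (reflection invariance, Assumption 1). Then the pushforward of μ under ω ↦ ιᵀ P(G(ω)) ι equals the pushforward of μ ⊗ ν under (ω, s) ↦ sᵀ P(G(ω)) s. In particular, the Anderson–Rubin statistic AR(β₀) = ιᵀ P(G(β₀)) ι has the same distribution as AR_r(β₀) = rᵀ P(G(β₀)) r with r an independent uniform sign vector. -/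
open Matrix MeasureTheory

instance matrixMeasurableSpace {m n : Type*} : MeasurableSpace (Matrix m n ℝ) :=
  (inferInstance : MeasurableSpace (m → n → ℝ))

/-- The ±1 sign vector associated to a Boolean vector. -/
noncomputable def signVec {m : ℕ} (s : Fin m → Bool) : Fin m → ℝ :=
  fun i => if s i then 1 else -1

/-- The projector `P(A) = A (AᵀA)⁻¹ Aᵀ` onto the column space of `A`. -/
noncomputable def projMat {n k : ℕ} (A : Matrix (Fin n) (Fin k) ℝ) :
    Matrix (Fin n) (Fin n) ℝ :=
  A * (Aᵀ * A)⁻¹ * Aᵀ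

instance {m n : Type*} [Countable m] [Countable n] :
    OpensMeasurableSpace (Matrix m n ℝ) :=
  (inferInstance : OpensMeasurableSpace (m → n → ℝ))

lemma measurable_matrix_entry {m l : Type*} [MeasurableSpace α] {f : α → Matrix m l ℝ}
    (hf : Measurable f) (i : m) (j : l) : Measurable fun a => f a i j :=
  ((measurable_pi_apply j).comp ((measurable_pi_apply i).comp hf))

lemma measurable_projMat {n k : ℕ} {α : Type*} [MeasurableSpace α]
    {f : α → Matrix (Fin n) (Fin k) ℝ} (hf : Measurable f) (i j : Fin n) :
    Measurable fun a => projMat (f a) i j := by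
  have hdet : Measurable fun a => ((f a)ᵀ * f a).det := by
    have : Continuous fun A : Matrix (Fin n) (Fin k) ℝ => (Aᵀ * A).det :=
      (continuous_id.matrix_transpose.matrix_mul continuous_id).matrix_det
    exact this.measurable.comp hf
  have hinv : ∀ p q : Fin k, Measurable fun a => ((f a)ᵀ * f a)⁻¹ p q := by
    intro p q
    have hadj : Measurable fun a => ((f a)ᵀ * f a).adjugate p q := by
      have : Continuous fun A : Matrix (Fin n) (Fin k) ℝ => (Aᵀ * A).adjugate p q :=
        ((continuous_id.matrix_transpose.matrix_mul continuous_id).matrix_adjugate.matrix_elem p q)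
      exact this.measurable.comp hf
    simp only [Matrix.inv_def, Ring.inverse_eq_inv', Matrix.smul_apply, smul_eq_mul]
    exact (hdet.inv).mul hadj
  have hmul : ∀ p : Fin n, ∀ q : Fin k, Measurable fun a => (f a * ((f a)ᵀ * f a)⁻¹) p q := by
    intro p q
    simp only [Matrix.mul_apply]
    exact Finset.measurable_sum _ fun c _ =>
      (measurable_matrix_entry hf p c).mul (hinv c q)
  simp only [projMat, Matrix.mul_apply, Matrix.transpose_apply]
  exact Finset.measurable_sum _ fun c _ => (hmul i c).mul (measurable_matrix_entry hf j c)

lemma key {n k : ℕ} (A : Matrix (Fin n) (Fin k) ℝ) (s : Fin n → Bool) :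
    (fun _ : Fin n => (1 : ℝ)) ⬝ᵥ (projMat (Matrix.diagonal (signVec s) * A)).mulVec
      (fun _ => 1) = signVec s ⬝ᵥ (projMat A).mulVec (signVec s) := by
  set D := Matrix.diagonal (signVec s) with hD
  have hDD : D * D = 1 := by
    rw [hD, Matrix.diagonal_mul_diagonal]
    convert Matrix.diagonal_one using 2
    funext i
    simp [signVec]
    by_cases h : s i <;> simp [h]
  have hDT : Dᵀ = D := Matrix.diagonal_transpose _
  have h1 : projMat (D * A) = D * projMat A * D := by
    unfold projMat
    rw [Matrix.transpose_mul, hDT]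
    have : Aᵀ * D * (D * A) = Aᵀ * A := by
      rw [Matrix.mul_assoc Aᵀ D, ← Matrix.mul_assoc D, hDD, Matrix.one_mul]
    rw [this]
    simp only [Matrix.mul_assoc]
  rw [h1]
  have hmv : D.mulVec (fun _ => (1 : ℝ)) = signVec s := by
    funext i; simp [hD, Matrix.mulVec_diagonal]
  have hvm : Matrix.vecMul (fun _ : Fin n => (1 : ℝ)) D = signVec s := by
    funext i; simp [hD, Matrix.vecMul_diagonal]
  have h2 : (D * projMat A * D) *ᵥ (fun _ : Fin n => (1 : ℝ))
      = D *ᵥ (projMat A *ᵥ signVec s) := by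
    rw [← Matrix.mulVec_mulVec, ← Matrix.mulVec_mulVec, hmv]
  rw [h2, Matrix.dotProduct_mulVec, hvm]

/-- Under reflection invariance (Assumption 1), the AR statistic
`AR(β₀) = ιᵀ P(G(β₀)) ι` has the same distribution as `AR_r(β₀) = rᵀ P(G(β₀)) r`
with `r` an independent uniform sign vector. -/
theorem stmt_2 {n k : ℕ} {Ω : Type*} [MeasurableSpace Ω]
    (μ : Measure Ω) [IsProbabilityMeasure μ]
    (G : Ω → Matrix (Fin n) (Fin k) ℝ) (hG : Measurable G)
    (hinv : ∀ ω, IsUnit ((G ω)ᵀ * G ω))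
    (hrefl :
      Measure.map G μ =
        Measure.map (fun p : Ω × (Fin n → Bool) => Matrix.diagonal (signVec p.2) * G p.1)
          (μ.prod ((PMF.uniformOfFintype (Fin n → Bool)).toMeasure))) :
    Measure.map (fun ω => (fun _ : Fin n => (1 : ℝ)) ⬝ᵥ (projMat (G ω)).mulVec (fun _ => 1)) μ =
      Measure.map
        (fun p : Ω × (Fin n → Bool) => signVec p.2 ⬝ᵥ (projMat (G p.1)).mulVec (signVec p.2))
        (μ.prod ((PMF.uniformOfFintype (Fin n → Bool)).toMeasure)) := by
  set F : Matrix (Fin n) (Fin k) ℝ → ℝ :=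
    fun A => (fun _ : Fin n => (1 : ℝ)) ⬝ᵥ (projMat A).mulVec (fun _ => 1) with hF
  have hFm : Measurable F := by
    have hFeq : F = fun A => ∑ i, ∑ j, projMat A i j := by
      funext A
      simp [hF, dotProduct, Matrix.mulVec]
    rw [hFeq]
    exact Finset.measurable_sum _ fun i _ =>
      Finset.measurable_sum _ fun j _ => measurable_projMat measurable_id i j
  have hH : Measurable fun p : Ω × (Fin n → Bool) =>
      Matrix.diagonal (signVec p.2) * G p.1 := by
    apply measurable_pi_lambda _ fun i => measurable_pi_lambda _ fun j => ?_
    have : (fun p : Ω × (Fin n → Bool) => (Matrix.diagonal (signVec p.2) * G p.1) i j)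
        = fun p => signVec p.2 i * G p.1 i j := by
      funext p
      simp [Matrix.diagonal_mul]
    rw [this]
    have h1 : Measurable fun p : Ω × (Fin n → Bool) => signVec p.2 i := by
      exact Measurable.comp' (measurable_of_countable fun b : Bool => if b then (1 : ℝ) else -1)
        ((measurable_pi_apply i).comp measurable_snd)
    exact h1.mul (measurable_matrix_entry (hG.comp measurable_fst) i j)
  calc Measure.map (fun ω => F (G ω)) μ
      = Measure.map F (Measure.map G μ) := (Measure.map_map hFm hG).symm
    _ = Measure.map F (Measure.map
        (fun p : Ω × (Fin n → Bool) => Matrix.diagonal (signVec p.2) * G p.1)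
        (μ.prod ((PMF.uniformOfFintype (Fin n → Bool)).toMeasure))) := by rw [hrefl]
    _ = _ := by
        rw [Measure.map_map hFm hH]
        congr 1
        funext p
        exact key (G p.1) p.2
end

section
/- Let A and B be arbitrary real n × n matrices, v ∈ ℝⁿ, and let r be uniformly distributed on {−1,1}ⁿ. Then E[(vᵀr)·(rᵀ A D_r B r)] = Σ_{i,j} v_i A_{ij} B_{jj} + Σ_{i,j} A_{ij} B_{ji} v_j + Σ_{i,j} A_{ii} B_{ij} v_j − 2 · Σ_{i} A_{ii} B_{ii} v_i, where D_r is the diagonal matrix with r on its diagonal. Equivalently, in matrix notation, E[vᵀr · rᵀ A D_r B r] = vᵀ A D_B ι + ιᵀ(A ∘ Bᵀ)v + ιᵀ D_A B v − 2 ιᵀ D_A D_B v. -/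
open Matrix

lemma signVec_sq {m : ℕ} (s : Fin m → Bool) (i : Fin m) :
    signVec s i * signVec s i = 1 := by
  unfold signVec; by_cases h : s i <;> simp [h]

lemma signVec_update {m : ℕ} (s : Fin m → Bool) (i j : Fin m) :
    signVec (Function.update s i (!s i)) j = if j = i then -signVec s j else signVec s j := by
  unfold signVec
  by_cases h : j = i
  · subst h; by_cases hs : s j <;> simp [hs]
  · simp [Function.update_of_ne h, h]

/-- flip involution kills sums of functions odd in coordinate `i`. -/
lemma flip_sum {m : ℕ} (i : Fin m) (F : (Fin m → Bool) → ℝ)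
    (h : ∀ s, F (Function.update s i (!s i)) = - F s) :
    ∑ s : Fin m → Bool, F s = 0 := by
  apply Finset.sum_ninvolution (fun s => Function.update s i (!s i))
  · intro s; rw [h]; ring
  · intro s hF heq
    apply hF
    have := h s
    rw [heq] at this
    linarith
  · intro s; exact Finset.mem_univ _
  · intro s
    funext j
    by_cases hj : j = i
    · subst hj; simp
    · simp [Function.update_of_ne hj]

lemma pair_sum {m : ℕ} (i j : Fin m) :
    ∑ s : Fin m → Bool, signVec s i * signVec s j
      = if i = j then (2 : ℝ) ^ m else 0 := by
  by_cases h : i = j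
  · subst h
    simp only [signVec_sq, Finset.sum_const, Finset.card_univ, if_true]
    simp [Fintype.card_fun]
  · rw [if_neg h]
    apply flip_sum i
    intro s
    simp [signVec_update, h, Ne.symm h]

lemma quad_sum {m : ℕ} (i p q w : Fin m) :
    ∑ s : Fin m → Bool, signVec s i * signVec s p * signVec s q * signVec s w
      = (if p = i ∧ w = q then (2 : ℝ) ^ m else 0)
        + (if q = i ∧ w = p then (2 : ℝ) ^ m else 0)
        + (if w = i ∧ q = p then (2 : ℝ) ^ m else 0)
        - 2 * (if p = i ∧ q = i ∧ w = i then (2 : ℝ) ^ m else 0) := by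
  by_cases hip : i = p
  · subst hip
    have e : ∀ s : Fin m → Bool,
        signVec s i * signVec s i * signVec s q * signVec s w = signVec s q * signVec s w := by
      intro s; rw [signVec_sq, one_mul]
    rw [Finset.sum_congr rfl (fun s _ => e s), pair_sum]
    by_cases hqw : q = w <;> by_cases hqi : q = i <;> by_cases hwi : w = i <;>
      simp_all [eq_comm] <;> ring
  · by_cases hqw : q = w
    · subst hqw
      have e : ∀ s : Fin m → Bool,
          signVec s i * signVec s p * signVec s q * signVec s q = signVec s i * signVec s p := by
        intro s; rw [mul_assoc, signVec_sq, mul_one]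
      rw [Finset.sum_congr rfl (fun s _ => e s), pair_sum, if_neg hip]
      by_cases hqi : q = i <;> by_cases hqp : q = p <;> simp_all [eq_comm]
    · by_cases hiq : i = q
      · subst hiq
        have e : ∀ s : Fin m → Bool,
            signVec s i * signVec s p * signVec s i * signVec s w
              = signVec s p * signVec s w := by
          intro s
          linear_combination signVec s p * signVec s w * (signVec_sq s i)
        rw [Finset.sum_congr rfl (fun s _ => e s), pair_sum]
        by_cases hpw : p = w <;> by_cases hpi : p = i <;> by_cases hwi : w = i <;> simp_all [eq_comm] <;> ring
      · by_cases hiw : i = w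
        · subst hiw
          have e : ∀ s : Fin m → Bool,
              signVec s i * signVec s p * signVec s q * signVec s i
                = signVec s p * signVec s q := by
            intro s
            linear_combination signVec s p * signVec s q * (signVec_sq s i)
          rw [Finset.sum_congr rfl (fun s _ => e s), pair_sum]
          by_cases hpq : p = q <;> simp_all [eq_comm]
        · have z : ∑ s : Fin m → Bool,
              signVec s i * signVec s p * signVec s q * signVec s w = 0 := by
            apply flip_sum i
            intro s
            simp [signVec_update, Ne.symm hip, Ne.symm hiq, Ne.symm hiw]
          rw [z]
          simp [Ne.symm hip, Ne.symm hiq, Ne.symm hiw, hqw]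

lemma sum4_comm {n : ℕ} {M : Type*} [AddCommMonoid M]
    (f : Fin n → Fin n → Fin n → Fin n → M) :
    ∑ p : Fin n, ∑ w : Fin n, ∑ q : Fin n, ∑ i : Fin n, f i p q w
      = ∑ i : Fin n, ∑ p : Fin n, ∑ q : Fin n, ∑ w : Fin n, f i p q w :=
  calc ∑ p : Fin n, ∑ w : Fin n, ∑ q : Fin n, ∑ i : Fin n, f i p q w
      = ∑ p : Fin n, ∑ w : Fin n, ∑ i : Fin n, ∑ q : Fin n, f i p q w :=
        Finset.sum_congr rfl fun p _ => Finset.sum_congr rfl fun w _ => Finset.sum_comm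
    _ = ∑ p : Fin n, ∑ i : Fin n, ∑ w : Fin n, ∑ q : Fin n, f i p q w :=
        Finset.sum_congr rfl fun p _ => Finset.sum_comm
    _ = ∑ i : Fin n, ∑ p : Fin n, ∑ w : Fin n, ∑ q : Fin n, f i p q w := Finset.sum_comm
    _ = ∑ i : Fin n, ∑ p : Fin n, ∑ q : Fin n, ∑ w : Fin n, f i p q w :=
        Finset.sum_congr rfl fun i _ => Finset.sum_congr rfl fun p _ => Finset.sum_comm


/-- Item 3 of Supplementary Lemma S.1: for arbitrary `A, B`, `v ∈ ℝⁿ` and `r` uniform on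
`{−1,1}ⁿ`, `E[(vᵀr)(rᵀ A D_r B r)] =
Σ_{i,j} vᵢ Aᵢⱼ Bⱼⱼ + Σ_{i,j} Aᵢⱼ Bⱼᵢ vⱼ + Σ_{i,j} Aᵢᵢ Bᵢⱼ vⱼ − 2 Σᵢ Aᵢᵢ Bᵢᵢ vᵢ`. -/
theorem stmt_6 {n : ℕ} (A B : Matrix (Fin n) (Fin n) ℝ) (v : Fin n → ℝ) :
    ((2 : ℝ) ^ n)⁻¹ *
        ∑ s : Fin n → Bool,
          (v ⬝ᵥ signVec s) *
            (signVec s ⬝ᵥ (A * Matrix.diagonal (signVec s) * B).mulVec (signVec s))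
      = (∑ i, ∑ j, v i * A i j * B j j) + (∑ i, ∑ j, A i j * B j i * v j)
        + (∑ i, ∑ j, A i i * B i j * v j) - 2 * ∑ i, A i i * B i i * v i := by
  have hpow : ((2:ℝ) ^ n) ≠ 0 := by positivity
  have expand : ∀ s : Fin n → Bool,
      (v ⬝ᵥ signVec s) *
          (signVec s ⬝ᵥ (A * Matrix.diagonal (signVec s) * B).mulVec (signVec s))
        = ∑ i, ∑ p, ∑ q, ∑ w, v i * A p q * B q w *
            (signVec s i * signVec s p * signVec s q * signVec s w) := by
    intro s
    have h1 : ∀ p w, (A * Matrix.diagonal (signVec s) * B) p w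
        = ∑ q, A p q * signVec s q * B q w := by
      intro p w
      rw [Matrix.mul_apply]
      refine Finset.sum_congr rfl fun q _ => ?_
      rw [Matrix.mul_diagonal]
    simp only [dotProduct, mulVec, h1, Finset.sum_mul, Finset.mul_sum]
    refine (sum4_comm fun i p q w =>
      v i * signVec s i * (signVec s p * (A p q * signVec s q * B q w * signVec s w))).trans ?_
    refine Finset.sum_congr rfl fun i _ => ?_
    refine Finset.sum_congr rfl fun p _ => ?_
    refine Finset.sum_congr rfl fun q _ => ?_
    refine Finset.sum_congr rfl fun w _ => ?_
    ring
  rw [Finset.sum_congr rfl (fun s _ => expand s)]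
  rw [Finset.sum_comm]
  have step : ∀ i : Fin n, ∑ s : Fin n → Bool, ∑ p, ∑ q, ∑ w, v i * A p q * B q w *
      (signVec s i * signVec s p * signVec s q * signVec s w)
      = ∑ p, ∑ q, ∑ w, v i * A p q * B q w *
        ((if p = i ∧ w = q then (2 : ℝ) ^ n else 0)
          + (if q = i ∧ w = p then (2 : ℝ) ^ n else 0)
          + (if w = i ∧ q = p then (2 : ℝ) ^ n else 0)
          - 2 * (if p = i ∧ q = i ∧ w = i then (2 : ℝ) ^ n else 0)) := by
    intro i
    rw [Finset.sum_comm]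
    refine Finset.sum_congr rfl fun p _ => ?_
    rw [Finset.sum_comm]
    refine Finset.sum_congr rfl fun q _ => ?_
    rw [Finset.sum_comm]
    refine Finset.sum_congr rfl fun w _ => ?_
    rw [← Finset.mul_sum, quad_sum]
  have T1 : ∀ i : Fin n, (∑ p, ∑ q, ∑ w, v i * A p q * B q w *
      (if p = i ∧ w = q then (2 : ℝ) ^ n else 0))
      = ∑ j, v i * A i j * B j j * (2 : ℝ) ^ n := by
    intro i
    have key : ∀ p q w : Fin n, v i * A p q * B q w *
        (if p = i ∧ w = q then (2 : ℝ) ^ n else 0)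
        = if w = q then (if p = i then v i * A i q * B q q * (2 : ℝ) ^ n else 0) else 0 := by
      intro p q w
      by_cases h2 : p = i <;> by_cases h3 : w = q <;> simp [h2, h3]
    simp only [key, Finset.sum_ite_eq', Finset.mem_univ, if_true]
    rw [Finset.sum_comm]
    simp only [Finset.sum_ite_eq', Finset.mem_univ, if_true]
  have T2 : ∀ i : Fin n, (∑ p, ∑ q, ∑ w, v i * A p q * B q w *
      (if q = i ∧ w = p then (2 : ℝ) ^ n else 0))
      = ∑ j, v i * A j i * B i j * (2 : ℝ) ^ n := by
    intro i
    have key : ∀ p q w : Fin n, v i * A p q * B q w *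
        (if q = i ∧ w = p then (2 : ℝ) ^ n else 0)
        = if w = p then (if q = i then v i * A p i * B i p * (2 : ℝ) ^ n else 0) else 0 := by
      intro p q w
      by_cases h2 : q = i <;> by_cases h3 : w = p <;> simp [h2, h3]
    simp only [key, Finset.sum_ite_eq', Finset.mem_univ, if_true]
  have T3 : ∀ i : Fin n, (∑ p, ∑ q, ∑ w, v i * A p q * B q w *
      (if w = i ∧ q = p then (2 : ℝ) ^ n else 0))
      = ∑ j, v i * A j j * B j i * (2 : ℝ) ^ n := by
    intro i
    have key : ∀ p q w : Fin n, v i * A p q * B q w *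
        (if w = i ∧ q = p then (2 : ℝ) ^ n else 0)
        = if w = i then (if q = p then v i * A p p * B p i * (2 : ℝ) ^ n else 0) else 0 := by
      intro p q w
      by_cases h2 : w = i <;> by_cases h3 : q = p <;> simp [h2, h3]
    simp only [key, Finset.sum_ite_eq', Finset.mem_univ, if_true]
  have T4 : ∀ i : Fin n, (∑ p, ∑ q, ∑ w, v i * A p q * B q w *
      (2 * if p = i ∧ q = i ∧ w = i then (2 : ℝ) ^ n else 0))
      = 2 * (v i * A i i * B i i * (2 : ℝ) ^ n) := by
    intro i
    have key : ∀ p q w : Fin n, v i * A p q * B q w *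
        (2 * if p = i ∧ q = i ∧ w = i then (2 : ℝ) ^ n else 0)
        = if w = i then (if q = i then (if p = i then
            2 * (v i * A i i * B i i * (2 : ℝ) ^ n) else 0) else 0) else 0 := by
      intro p q w
      by_cases h1 : p = i <;> by_cases h2 : q = i <;> by_cases h3 : w = i <;>
        simp [h1, h2, h3] <;> ring
    simp only [key, Finset.sum_ite_eq', Finset.mem_univ, if_true]
  have step2 : ∀ i : Fin n, (∑ p, ∑ q, ∑ w, v i * A p q * B q w *
      ((if p = i ∧ w = q then (2 : ℝ) ^ n else 0)
        + (if q = i ∧ w = p then (2 : ℝ) ^ n else 0)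
        + (if w = i ∧ q = p then (2 : ℝ) ^ n else 0)
        - 2 * (if p = i ∧ q = i ∧ w = i then (2 : ℝ) ^ n else 0)))
      = (∑ j, v i * A i j * B j j * (2 : ℝ) ^ n)
        + (∑ j, v i * A j i * B i j * (2 : ℝ) ^ n)
        + (∑ j, v i * A j j * B j i * (2 : ℝ) ^ n)
        - 2 * (v i * A i i * B i i * (2 : ℝ) ^ n) := by
    intro i
    simp only [mul_add, mul_sub, Finset.sum_add_distrib, Finset.sum_sub_distrib]
    rw [T1 i, T2 i, T3 i, T4 i]
  rw [Finset.sum_congr rfl (fun i _ => step i),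
      Finset.sum_congr rfl (fun i _ => step2 i)]
  simp only [Finset.sum_add_distrib, Finset.sum_sub_distrib, ← Finset.mul_sum]
  have e1 : ∑ i : Fin n, ∑ j, v i * A i j * B j j * (2 : ℝ) ^ n
      = (∑ i, ∑ j, v i * A i j * B j j) * (2 : ℝ) ^ n := by
    rw [Finset.sum_mul]
    refine Finset.sum_congr rfl fun i _ => ?_
    rw [Finset.sum_mul]
  have e2 : ∑ i : Fin n, ∑ j, v i * A j i * B i j * (2 : ℝ) ^ n
      = (∑ i, ∑ j, A i j * B j i * v j) * (2 : ℝ) ^ n := by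
    rw [Finset.sum_comm, Finset.sum_mul]
    refine Finset.sum_congr rfl fun i _ => ?_
    rw [Finset.sum_mul]
    refine Finset.sum_congr rfl fun j _ => ?_
    ring
  have e3 : ∑ i : Fin n, ∑ j, v i * A j j * B j i * (2 : ℝ) ^ n
      = (∑ i, ∑ j, A i i * B i j * v j) * (2 : ℝ) ^ n := by
    rw [Finset.sum_comm, Finset.sum_mul]
    refine Finset.sum_congr rfl fun i _ => ?_
    rw [Finset.sum_mul]
    refine Finset.sum_congr rfl fun j _ => ?_
    ring
  have e4 : ∑ i : Fin n, v i * A i i * B i i * (2 : ℝ) ^ n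
      = (∑ i, A i i * B i i * v i) * (2 : ℝ) ^ n := by
    rw [Finset.sum_mul]
    refine Finset.sum_congr rfl fun i _ => ?_
    ring
  rw [e1, e2, e3, e4]
  field_simp
end

section
/- Let A₁, A₂, A₃, A₄ be arbitrary real n × n matrices and let r be uniformly distributed on {−1,1}ⁿ. Then E[rᵀ A₁ D_r A₂ A₃ D_r A₄ r] = Σ_{i} (A₄A₁)_{ii}(A₂A₃)_{ii} + Σ_{i,j} (A₁)_{ii}(A₂A₃)_{ij}(A₄)_{jj} − 2 · Σ_{i} (A₁)_{ii}(A₂A₃)_{ii}(A₄)_{ii} + Σ_{i,j} (A₄)_{ij}(A₁)_{ij}(A₂A₃)_{ji}, where D_r is the diagonal matrix with r on its diagonal. In matrix notation: E = tr(D_{A₄A₁} D_{A₂A₃}) + ιᵀ D_{A₁} A₂A₃ D_{A₄} ι − 2 tr(D_{A₁} A₂A₃ D_{A₄}) + ιᵀ(A₄ ∘ A₁ ∘ (A₃ᵀA₂ᵀ))ι. -/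
open Matrix

lemma sum_sign_pow {n : ℕ} (c : Fin n → ℕ) :
    ∑ s : Fin n → Bool, ∏ m, (signVec s m) ^ (c m)
      = ∏ m, (if Even (c m) then (2:ℝ) else 0) := by
  have h : ∀ m : Fin n, ∑ b : Bool, ((if b then (1:ℝ) else -1) ^ (c m))
      = (if Even (c m) then (2:ℝ) else 0) := by
    intro m
    rw [Fintype.sum_bool]
    rcases Nat.even_or_odd (c m) with h | h
    · simp [h, Even.neg_one_pow h]; norm_num
    · simp [Nat.not_even_iff_odd.2 h, Odd.neg_one_pow h]
  calc ∑ s : Fin n → Bool, ∏ m, (signVec s m) ^ (c m)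
      = ∑ s ∈ Fintype.piFinset (fun _ : Fin n => (Finset.univ : Finset Bool)),
          ∏ m, ((if s m then (1:ℝ) else -1) ^ (c m)) := by
        rw [Fintype.piFinset_univ]; rfl
    _ = ∏ m, ∑ b : Bool, ((if b then (1:ℝ) else -1) ^ (c m)) := by
        rw [Finset.prod_univ_sum]
    _ = _ := by exact Finset.prod_congr rfl fun m _ => h m

lemma prod_even_signs {n : ℕ} (c : Fin n → ℕ) (h : ∀ m, Even (c m)) :
    ∏ m, (if Even (c m) then (2:ℝ) else 0) = 2 ^ n := by
  rw [Finset.prod_congr rfl (fun m _ => if_pos (h m)), Finset.prod_const,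
    Finset.card_univ, Fintype.card_fin]

lemma prod_odd_signs {n : ℕ} (c : Fin n → ℕ) (m0 : Fin n) (h : ¬ Even (c m0)) :
    ∏ m, (if Even (c m) then (2:ℝ) else 0) = 0 :=
  Finset.prod_eq_zero (Finset.mem_univ m0) (if_neg h)

lemma key_fourth_moment {n : ℕ} (i j k l : Fin n) :
    ∑ s : Fin n → Bool, signVec s i * signVec s j * signVec s k * signVec s l
      = 2 ^ n * ((if i = j then (1:ℝ) else 0) * (if k = l then 1 else 0)
          + (if i = k then (1:ℝ) else 0) * (if j = l then 1 else 0)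
          + (if i = l then (1:ℝ) else 0) * (if j = k then 1 else 0)
          - 2 * ((if i = j then (1:ℝ) else 0) * (if i = k then 1 else 0)
              * (if i = l then 1 else 0))) := by
  set c : Fin n → ℕ := fun m =>
    (if i = m then 1 else 0) + (if j = m then 1 else 0)
      + (if k = m then 1 else 0) + (if l = m then 1 else 0) with hc
  have hexp : ∀ s : Fin n → Bool,
      signVec s i * signVec s j * signVec s k * signVec s l
        = ∏ m, (signVec s m) ^ (c m) := by
    intro s
    have h1 : ∀ a : Fin n, ∏ m, (signVec s m) ^ (if a = m then 1 else 0) = signVec s a := by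
      intro a
      have : ∀ m : Fin n, (signVec s m) ^ (if a = m then 1 else 0)
          = (if a = m then signVec s m else 1) := by
        intro m; split <;> simp
      rw [Finset.prod_congr rfl fun m _ => this m, Finset.prod_ite_eq, if_pos (Finset.mem_univ a)]
    simp only [hc, pow_add, Finset.prod_mul_distrib, h1]
  rw [Finset.sum_congr rfl fun s _ => hexp s, sum_sign_pow]
  by_cases hij : i = j
  · subst hij
    by_cases hkl : k = l
    · subst hkl
      by_cases hik : i = k
      · subst hik
        rw [prod_even_signs c (by intro m; simp only [hc]; split_ifs <;> decide)]
        norm_num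
      · have hki := Ne.symm hik
        rw [prod_even_signs c (by intro m; simp only [hc]; split_ifs <;> decide)]
        simp [hik]
    · have hlk := Ne.symm hkl
      rw [prod_odd_signs c k (by simp only [hc]; simp [hlk])]
      have : ¬ (i = k ∧ i = l) := by rintro ⟨h1, h2⟩; exact hkl (h1 ▸ h2 ▸ rfl)
      by_cases h1 : i = k <;> by_cases h2 : i = l <;> simp_all
  · have hji := Ne.symm hij
    by_cases hik : i = k
    · subst hik
      by_cases hjl : j = l
      · subst hjl
        rw [prod_even_signs c (by intro m; simp only [hc]; split_ifs <;> decide)]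
        simp [hij]
      · have hlj := Ne.symm hjl
        rw [prod_odd_signs c j (by simp only [hc]; simp [hji, hlj])]
        simp [hij, hji, hjl]
    · have hki := Ne.symm hik
      by_cases hil : i = l
      · subst hil
        by_cases hjk : j = k
        · subst hjk
          rw [prod_even_signs c (by intro m; simp only [hc]; split_ifs <;> decide)]
          simp [hij, hik]
        · have hkj := Ne.symm hjk
          rw [prod_odd_signs c j (by simp only [hc]; simp [hji, hkj])]
          simp [hij, hji, hik, hjk]
      · have hli := Ne.symm hil
        rw [prod_odd_signs c i (by simp only [hc]; simp [hji, hki, hli])]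
        simp [hij, hik, hil]

lemma quad_eval {n : ℕ} (A B C : Matrix (Fin n) (Fin n) ℝ) :
    ∑ i, ∑ l, ∑ j, ∑ k, A i j * B j k * C k l *
        ((if i = j then (1:ℝ) else 0) * (if k = l then 1 else 0)
          + (if i = k then (1:ℝ) else 0) * (if j = l then 1 else 0)
          + (if i = l then (1:ℝ) else 0) * (if j = k then 1 else 0)
          - 2 * ((if i = j then (1:ℝ) else 0) * (if i = k then 1 else 0)
              * (if i = l then 1 else 0)))
      = (∑ i, (C * A) i i * B i i)
        + (∑ i, ∑ j, A i i * B i j * C j j)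
        - 2 * (∑ i, A i i * B i i * C i i)
        + (∑ i, ∑ j, C i j * A i j * B j i) := by
  have inner : ∀ i l : Fin n, (∑ j, ∑ k, A i j * B j k * C k l *
        ((if i = j then (1:ℝ) else 0) * (if k = l then 1 else 0)
          + (if i = k then (1:ℝ) else 0) * (if j = l then 1 else 0)
          + (if i = l then (1:ℝ) else 0) * (if j = k then 1 else 0)
          - 2 * ((if i = j then (1:ℝ) else 0) * (if i = k then 1 else 0)
              * (if i = l then 1 else 0))))
      = A i i * B i l * C l l + A i l * B l i * C i l
        + (if i = l then (1:ℝ) else 0) * (∑ j, A i j * B j j * C j l)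
        - 2 * ((if i = l then (1:ℝ) else 0) * (A i i * B i i * C i i)) := by
    intro i l
    simp only [mul_add, mul_sub, Finset.sum_add_distrib, Finset.sum_sub_distrib]
    congr 1
    · congr 2
      · simp [mul_ite, ite_mul, mul_zero, zero_mul, mul_one, Finset.sum_ite_eq,
          Finset.sum_ite_eq']
      · simp [mul_ite, ite_mul, mul_zero, zero_mul, mul_one, Finset.sum_ite_eq,
          Finset.sum_ite_eq']
      · rw [Finset.mul_sum]
        refine Finset.sum_congr rfl fun j _ => ?_
        simp [mul_ite, ite_mul, mul_zero, zero_mul, mul_one, Finset.sum_ite_eq,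
          Finset.sum_ite_eq', mul_comm]
    · simp [mul_ite, ite_mul, mul_zero, zero_mul, mul_one, Finset.sum_ite_eq,
        Finset.sum_ite_eq']
      split
      · subst_vars; ring
      · ring
  rw [Finset.sum_congr rfl fun i _ => Finset.sum_congr rfl fun l _ => inner i l]
  simp only [Finset.sum_add_distrib, Finset.sum_sub_distrib, ite_mul, one_mul, zero_mul,
    Finset.sum_ite_eq', Finset.mem_univ, if_true, ← Finset.mul_sum]
  rw [Finset.sum_comm (f := fun i l => A i i * B i l * C l l)]
  simp only [Finset.sum_ite_eq, Finset.mem_univ, if_true, Matrix.mul_apply, Finset.sum_mul]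
  have h2 : ∑ x : Fin n, ∑ x1 : Fin n, A x x1 * B x1 x * C x x1
      = ∑ i, ∑ j, C i j * A i j * B j i :=
    Finset.sum_congr rfl fun _ _ => Finset.sum_congr rfl fun _ _ => by ring
  have h3 : ∑ x : Fin n, ∑ j, A x j * B j j * C j x
      = ∑ i, ∑ j, C i j * A j i * B i i := by
    rw [Finset.sum_comm]
    exact Finset.sum_congr rfl fun _ _ => Finset.sum_congr rfl fun _ _ => by ring
  rw [h2, h3]
  ring

/-- Item 5 of Supplementary Lemma S.1: for arbitrary `A₁, A₂, A₃, A₄` and `r` uniform on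
`{−1,1}ⁿ`, `E[rᵀ A₁ D_r A₂ A₃ D_r A₄ r] = Σᵢ (A₄A₁)ᵢᵢ (A₂A₃)ᵢᵢ + Σ_{i,j} (A₁)ᵢᵢ (A₂A₃)ᵢⱼ (A₄)ⱼⱼ
− 2 Σᵢ (A₁)ᵢᵢ (A₂A₃)ᵢᵢ (A₄)ᵢᵢ + Σ_{i,j} (A₄)ᵢⱼ (A₁)ᵢⱼ (A₂A₃)ⱼᵢ`. -/
theorem stmt_7 {n : ℕ} (A₁ A₂ A₃ A₄ : Matrix (Fin n) (Fin n) ℝ) :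
    ((2 : ℝ) ^ n)⁻¹ *
        ∑ s : Fin n → Bool,
          signVec s ⬝ᵥ
            (A₁ * Matrix.diagonal (signVec s) * A₂ * A₃ * Matrix.diagonal (signVec s) *
              A₄).mulVec (signVec s)
      = (∑ i, (A₄ * A₁) i i * (A₂ * A₃) i i)
        + (∑ i, ∑ j, A₁ i i * (A₂ * A₃) i j * A₄ j j)
        - 2 * (∑ i, A₁ i i * (A₂ * A₃) i i * A₄ i i)
        + (∑ i, ∑ j, A₄ i j * A₁ i j * (A₂ * A₃) j i) := by
  set B := A₂ * A₃ with hB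
  have hexp : ∀ s : Fin n → Bool,
      signVec s ⬝ᵥ (A₁ * Matrix.diagonal (signVec s) * A₂ * A₃ * Matrix.diagonal (signVec s) *
          A₄).mulVec (signVec s)
        = ∑ i, ∑ l, ∑ j, ∑ k, A₁ i j * B j k * A₄ k l *
            (signVec s i * signVec s j * signVec s k * signVec s l) := by
    intro s
    set σ := signVec s with hσ
    have hMas : A₁ * Matrix.diagonal σ * A₂ * A₃ * Matrix.diagonal σ * A₄
        = (A₁ * Matrix.diagonal σ) * (B * (Matrix.diagonal σ * A₄)) := by
      simp only [hB, Matrix.mul_assoc]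
    have entry : ∀ i l, ((A₁ * Matrix.diagonal σ) * (B * (Matrix.diagonal σ * A₄))) i l
        = ∑ j, ∑ k, (A₁ i j * σ j) * (B j k * (σ k * A₄ k l)) := by
      intro i l
      rw [Matrix.mul_apply]
      refine Finset.sum_congr rfl fun j _ => ?_
      rw [Matrix.mul_diagonal, Matrix.mul_apply, Finset.mul_sum]
      refine Finset.sum_congr rfl fun k _ => ?_
      rw [Matrix.diagonal_mul]
    rw [hMas]
    calc σ ⬝ᵥ ((A₁ * Matrix.diagonal σ) * (B * (Matrix.diagonal σ * A₄))).mulVec σ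
        = ∑ i, σ i * ∑ l, ((A₁ * Matrix.diagonal σ) * (B * (Matrix.diagonal σ * A₄))) i l * σ l := by
          simp [dotProduct, mulVec]
      _ = ∑ i, ∑ l, ∑ j, ∑ k, A₁ i j * B j k * A₄ k l * (σ i * σ j * σ k * σ l) := by
          refine Finset.sum_congr rfl fun i _ => ?_
          simp only [entry, Finset.sum_mul, Finset.mul_sum]
          refine Finset.sum_congr rfl fun l _ => Finset.sum_congr rfl fun j _ =>
            Finset.sum_congr rfl fun k _ => by ring
  rw [Finset.sum_congr rfl fun s _ => hexp s]
  have swap : ∑ s : Fin n → Bool, ∑ i, ∑ l, ∑ j, ∑ k, A₁ i j * B j k * A₄ k l *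
        (signVec s i * signVec s j * signVec s k * signVec s l)
      = ∑ i, ∑ l, ∑ j, ∑ k, A₁ i j * B j k * A₄ k l *
          ∑ s : Fin n → Bool, signVec s i * signVec s j * signVec s k * signVec s l := by
    rw [Finset.sum_comm]
    refine Finset.sum_congr rfl fun i _ => ?_
    rw [Finset.sum_comm]
    refine Finset.sum_congr rfl fun l _ => ?_
    rw [Finset.sum_comm]
    refine Finset.sum_congr rfl fun j _ => ?_
    rw [Finset.sum_comm]
    exact Finset.sum_congr rfl fun k _ => (Finset.mul_sum _ _ _).symm
  rw [swap]
  have h2n : ((2:ℝ)^n) ≠ 0 := by positivity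
  calc ((2 : ℝ) ^ n)⁻¹ * ∑ i, ∑ l, ∑ j, ∑ k, A₁ i j * B j k * A₄ k l *
        ∑ s : Fin n → Bool, signVec s i * signVec s j * signVec s k * signVec s l
      = ∑ i, ∑ l, ∑ j, ∑ k, A₁ i j * B j k * A₄ k l *
          ((if i = j then (1:ℝ) else 0) * (if k = l then 1 else 0)
          + (if i = k then (1:ℝ) else 0) * (if j = l then 1 else 0)
          + (if i = l then (1:ℝ) else 0) * (if j = k then 1 else 0)
          - 2 * ((if i = j then (1:ℝ) else 0) * (if i = k then 1 else 0)
              * (if i = l then 1 else 0))) := by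
        simp only [key_fourth_moment, Finset.mul_sum]
        refine Finset.sum_congr rfl fun i _ => Finset.sum_congr rfl fun l _ =>
          Finset.sum_congr rfl fun j _ => Finset.sum_congr rfl fun k _ => ?_
        field_simp
    _ = (∑ i, (A₄ * A₁) i i * B i i)
        + (∑ i, ∑ j, A₁ i i * B i j * A₄ j j)
        - 2 * (∑ i, A₁ i i * B i i * A₄ i i)
        + (∑ i, ∑ j, A₄ i j * A₁ i j * B j i) := quad_eval A₁ B A₄
end

section
/- Let n, k be positive integers, ε ∈ ℝⁿ, Z a real n × k matrix such that ZᵀD_ε²Z is invertible, and let V := Z(ZᵀD_ε²Z)⁻¹Zᵀ and P := D_ε V D_ε. Let x̄, a ∈ ℝⁿ be arbitrary, and let r be uniformly distributed on {−1,1}ⁿ. Then E[ −(1/n) x̄ᵀ V D_ε r − (1/n) rᵀ D_a P r + (1/n) rᵀ P D_a P r + (1/n) rᵀ P D_r D_{x̄} V D_ε r ] = 0. -/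
open Matrix

/-- `V = Z (Zᵀ D_ε² Z)⁻¹ Zᵀ`. -/
noncomputable def Vmat {n k : ℕ} (ε : Fin n → ℝ) (Z : Matrix (Fin n) (Fin k) ℝ) :
    Matrix (Fin n) (Fin n) ℝ :=
  Z * (Zᵀ * Matrix.diagonal (fun i => ε i ^ 2) * Z)⁻¹ * Zᵀ

/-- `P = D_ε V D_ε`. -/
noncomputable def Pmat {n k : ℕ} (ε : Fin n → ℝ) (Z : Matrix (Fin n) (Fin k) ℝ) :
    Matrix (Fin n) (Fin n) ℝ :=
  Matrix.diagonal ε * Vmat ε Z * Matrix.diagonal ε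

/-- The sign-randomized score `S_{l,r}(β₀)` of the CU objective (equation (6) of the paper). -/
noncomputable def scoreR {n k : ℕ} (ε : Fin n → ℝ) (Z : Matrix (Fin n) (Fin k) ℝ)
    (xbar a : Fin n → ℝ) (s : Fin n → Bool) : ℝ :=
  -(1 / (n : ℝ)) * (xbar ⬝ᵥ (Vmat ε Z * Matrix.diagonal ε).mulVec (signVec s))
    - (1 / (n : ℝ)) * (signVec s ⬝ᵥ (Matrix.diagonal a * Pmat ε Z).mulVec (signVec s))
    + (1 / (n : ℝ)) *
        (signVec s ⬝ᵥ (Pmat ε Z * Matrix.diagonal a * Pmat ε Z).mulVec (signVec s))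
    + (1 / (n : ℝ)) *
        (signVec s ⬝ᵥ (Pmat ε Z * Matrix.diagonal (signVec s) * Matrix.diagonal xbar *
            Vmat ε Z * Matrix.diagonal ε).mulVec (signVec s))

/- ## Auxiliary lemmas -/

lemma signVec_update_same {n : ℕ} (s : Fin n → Bool) (m : Fin n) :
    signVec (Function.update s m (!s m)) m = -(signVec s m) := by
  simp [signVec, Function.update_self]
  cases h : s m <;> simp [h]

lemma signVec_update_ne {n : ℕ} (s : Fin n → Bool) (m j : Fin n) (b : Bool) (h : j ≠ m) :
    signVec (Function.update s m b) j = signVec s j := by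
  simp [signVec, Function.update_of_ne h]

/-- Summing an odd function of one sign coordinate over all sign vectors gives zero. -/
lemma sum_sign {n : ℕ} (m : Fin n) (F : (Fin n → Bool) → ℝ)
    (hF : ∀ s b, F (Function.update s m b) = F s) :
    ∑ s : Fin n → Bool, F s * signVec s m = 0 := by
  set σ : (Fin n → Bool) → (Fin n → Bool) := fun s => Function.update s m (!s m) with hσ
  have hinvol : Function.Involutive σ := by
    intro s
    funext j
    by_cases h : j = m
    · subst h; simp [σ, Function.update_self]
    · simp [σ, Function.update_of_ne h]
  have hsum : ∑ s : Fin n → Bool, F s * signVec s m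
      = ∑ s : Fin n → Bool, F (σ s) * signVec (σ s) m :=
    (Fintype.sum_equiv (Function.Involutive.toPerm σ hinvol) _ _ (fun s => rfl)).symm
  have hneg : ∀ s : Fin n → Bool, F (σ s) * signVec (σ s) m = -(F s * signVec s m) := by
    intro s
    rw [hF, signVec_update_same]
    ring
  rw [Finset.sum_congr rfl (fun s _ => hneg s)] at hsum
  rw [Finset.sum_neg_distrib] at hsum
  linarith

lemma sum_sv {n : ℕ} (j : Fin n) : ∑ s : Fin n → Bool, signVec s j = 0 := by
  have := sum_sign j (fun _ => (1:ℝ)) (fun _ _ => rfl)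
  simpa using this

lemma sv_mul_self {n : ℕ} (s : Fin n → Bool) (i : Fin n) :
    signVec s i * signVec s i = 1 := by
  cases h : s i <;> simp [signVec, h]

lemma sum_sign_sq {n : ℕ} (i j : Fin n) :
    ∑ s : Fin n → Bool, signVec s i * signVec s j
      = if i = j then (2:ℝ)^n else 0 := by
  by_cases h : i = j
  · subst h
    simp only [if_pos rfl]
    rw [Finset.sum_congr rfl (fun s _ => sv_mul_self s i)]
    simp [Finset.card_univ, Fintype.card_fun]
  · rw [if_neg h]
    have := sum_sign i (fun s => signVec s j)
      (fun s b => signVec_update_ne s i j b (fun hc => h hc.symm))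
    rw [← this]
    exact Finset.sum_congr rfl (fun s _ => mul_comm _ _)

lemma sum_sign_cube {n : ℕ} (i j l : Fin n) :
    ∑ s : Fin n → Bool, signVec s i * signVec s j * signVec s l = 0 := by
  by_cases hij : i = j
  · subst hij
    have : ∀ s : Fin n → Bool, signVec s i * signVec s i * signVec s l
        = (fun _ => (1:ℝ)) s * signVec s l := by
      intro s; rw [sv_mul_self]
    rw [Finset.sum_congr rfl (fun s _ => this s)]
    exact sum_sign l _ (fun _ _ => rfl)
  · by_cases hli : l = i
    · subst hli
      have : ∀ s : Fin n → Bool, signVec s l * signVec s j * signVec s l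
          = signVec s l * signVec s l * signVec s j := by intro s; ring
      rw [Finset.sum_congr rfl (fun s _ => this s)]
      have : ∀ s : Fin n → Bool, signVec s l * signVec s l * signVec s j
          = (fun _ => (1:ℝ)) s * signVec s j := by intro s; rw [sv_mul_self]
      rw [Finset.sum_congr rfl (fun s _ => this s)]
      exact sum_sign j _ (fun _ _ => rfl)
    · by_cases hlj : l = j
      · subst hlj
        have : ∀ s : Fin n → Bool, signVec s i * signVec s l * signVec s l
            = (fun _ => (1:ℝ)) s * signVec s i := by
          intro s; rw [mul_assoc, sv_mul_self]; ring
        rw [Finset.sum_congr rfl (fun s _ => this s)]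
        exact sum_sign i _ (fun _ _ => rfl)
      · have : ∀ s : Fin n → Bool, signVec s i * signVec s j * signVec s l
            = (signVec s j * signVec s l) * signVec s i := by intro s; ring
        rw [Finset.sum_congr rfl (fun s _ => this s)]
        exact sum_sign i (fun s => signVec s j * signVec s l)
          (fun s b => by
            rw [signVec_update_ne s i j b (fun hc => hij hc.symm),
              signVec_update_ne s i l b hli])

/-- Linear forms in the sign vector average to zero. -/
lemma sum_lin {n : ℕ} (x : Fin n → ℝ) (A : Matrix (Fin n) (Fin n) ℝ) :
    ∑ s : Fin n → Bool, x ⬝ᵥ A.mulVec (signVec s) = 0 := by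
  simp only [dotProduct, mulVec, Finset.mul_sum]
  rw [Finset.sum_comm]
  refine Finset.sum_eq_zero fun i _ => ?_
  rw [Finset.sum_comm]
  refine Finset.sum_eq_zero fun j _ => ?_
  have : ∀ s : Fin n → Bool, x i * (A i j * signVec s j)
      = (x i * A i j) * signVec s j := fun s => by ring
  rw [Finset.sum_congr rfl (fun s _ => this s), ← Finset.mul_sum, sum_sv, mul_zero]

/-- Quadratic forms in the sign vector average to the trace. -/
lemma sum_quad {n : ℕ} (B : Matrix (Fin n) (Fin n) ℝ) :
    ∑ s : Fin n → Bool, signVec s ⬝ᵥ B.mulVec (signVec s) = 2^n * B.trace := by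
  simp only [dotProduct, mulVec, Finset.mul_sum]
  rw [Finset.sum_comm]
  have key : ∀ i : Fin n, ∑ s : Fin n → Bool, ∑ j, signVec s i * (B i j * signVec s j)
      = 2^n * B i i := by
    intro i
    rw [Finset.sum_comm]
    have inner : ∀ j : Fin n, ∑ s : Fin n → Bool, signVec s i * (B i j * signVec s j)
        = B i j * (if i = j then (2:ℝ)^n else 0) := by
      intro j
      have : ∀ s : Fin n → Bool, signVec s i * (B i j * signVec s j)
          = B i j * (signVec s i * signVec s j) := fun s => by ring
      rw [Finset.sum_congr rfl (fun s _ => this s), ← Finset.mul_sum, sum_sign_sq]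
    rw [Finset.sum_congr rfl (fun j _ => inner j)]
    simp [Finset.mul_sum, Finset.sum_ite_eq, mul_comm]
  rw [Finset.sum_congr rfl (fun i _ => key i), ← Finset.mul_sum, Matrix.trace]
  rfl

/-- Cubic forms in the sign vector average to zero. -/
lemma sum_cubic {n : ℕ} (M Q : Matrix (Fin n) (Fin n) ℝ) :
    ∑ s : Fin n → Bool,
      signVec s ⬝ᵥ (M * Matrix.diagonal (signVec s) * Q).mulVec (signVec s) = 0 := by
  have entry : ∀ (s : Fin n → Bool) (i l : Fin n),
      (M * Matrix.diagonal (signVec s) * Q) i l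
        = ∑ j, M i j * signVec s j * Q j l := by
    intro s i l
    rw [Matrix.mul_apply]
    congr 1; funext j
    rw [Matrix.mul_diagonal]
  have expand : ∀ s : Fin n → Bool,
      signVec s ⬝ᵥ (M * Matrix.diagonal (signVec s) * Q).mulVec (signVec s)
        = ∑ i, ∑ l, ∑ j, (M i j * Q j l) * (signVec s i * signVec s j * signVec s l) := by
    intro s
    simp only [dotProduct, mulVec, Finset.mul_sum]
    refine Finset.sum_congr rfl fun i _ => ?_
    refine Finset.sum_congr rfl fun l _ => ?_
    rw [entry s i l, Finset.sum_mul, Finset.mul_sum]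
    refine Finset.sum_congr rfl fun j _ => ?_
    ring
  rw [Finset.sum_congr rfl (fun s _ => expand s), Finset.sum_comm]
  refine Finset.sum_eq_zero fun i _ => ?_
  rw [Finset.sum_comm]
  refine Finset.sum_eq_zero fun l _ => ?_
  rw [Finset.sum_comm]
  refine Finset.sum_eq_zero fun j _ => ?_
  rw [← Finset.mul_sum, sum_sign_cube, mul_zero]

/-- `P` is idempotent. -/
lemma Pmat_idem {n k : ℕ} (ε : Fin n → ℝ) (Z : Matrix (Fin n) (Fin k) ℝ)
    (hinv : IsUnit (Zᵀ * Matrix.diagonal (fun i => ε i ^ 2) * Z)) :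
    Pmat ε Z * Pmat ε Z = Pmat ε Z := by
  set D := Matrix.diagonal ε with hD
  set M := Zᵀ * Matrix.diagonal (fun i => ε i ^ 2) * Z with hMdef
  have hd : D * D = Matrix.diagonal (fun i => ε i ^ 2) := by
    rw [hD, Matrix.diagonal_mul_diagonal]
    congr 1; funext i; ring
  have hM : M⁻¹ * M = 1 :=
    Matrix.nonsing_inv_mul _ ((Matrix.isUnit_iff_isUnit_det _).mp hinv)
  have h2 : ∀ Y : Matrix (Fin k) (Fin n) ℝ, Zᵀ * (D * (D * (Z * Y))) = M * Y := by
    intro Y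
    rw [hMdef]
    simp only [← Matrix.mul_assoc]
    rw [show Zᵀ * D * D = Zᵀ * Matrix.diagonal (fun i => ε i ^ 2) from by
      rw [Matrix.mul_assoc Zᵀ D D, hd]]
  unfold Pmat Vmat
  rw [← hD, ← hMdef]
  simp only [Matrix.mul_assoc]
  rw [h2 (M⁻¹ * (Zᵀ * D)), ← Matrix.mul_assoc M⁻¹ M, hM, Matrix.one_mul]

/-- First assertion of Lemma 2: the sign-randomized CU score has mean zero under the
uniform distribution of the sign vector. -/
theorem stmt_8 {n k : ℕ} (hn : 0 < n) (hk : 0 < k)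
    (ε : Fin n → ℝ) (Z : Matrix (Fin n) (Fin k) ℝ)
    (hinv : IsUnit (Zᵀ * Matrix.diagonal (fun i => ε i ^ 2) * Z))
    (xbar a : Fin n → ℝ) :
    ((2 : ℝ) ^ n)⁻¹ * ∑ s : Fin n → Bool, scoreR ε Z xbar a s = 0 := by
  have h4 : ∑ s : Fin n → Bool,
      signVec s ⬝ᵥ (Pmat ε Z * Matrix.diagonal (signVec s) * Matrix.diagonal xbar *
          Vmat ε Z * Matrix.diagonal ε).mulVec (signVec s) = 0 := by
    have hmat : ∀ s : Fin n → Bool,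
        Pmat ε Z * Matrix.diagonal (signVec s) * Matrix.diagonal xbar *
            Vmat ε Z * Matrix.diagonal ε
          = Pmat ε Z * Matrix.diagonal (signVec s) *
              (Matrix.diagonal xbar * (Vmat ε Z * Matrix.diagonal ε)) := by
      intro s; simp only [Matrix.mul_assoc]
    rw [Finset.sum_congr rfl (fun s _ => by rw [hmat s])]
    exact sum_cubic (Pmat ε Z) (Matrix.diagonal xbar * (Vmat ε Z * Matrix.diagonal ε))
  have htr : (Pmat ε Z * Matrix.diagonal a * Pmat ε Z).trace
      = (Matrix.diagonal a * Pmat ε Z).trace := by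
    rw [Matrix.trace_mul_cycle (Pmat ε Z) (Matrix.diagonal a) (Pmat ε Z)]
    rw [Pmat_idem ε Z hinv, Matrix.trace_mul_comm]
  have hsum : ∑ s : Fin n → Bool, scoreR ε Z xbar a s = 0 := by
    simp only [scoreR]
    rw [Finset.sum_add_distrib, Finset.sum_add_distrib, Finset.sum_sub_distrib,
      ← Finset.mul_sum, ← Finset.mul_sum, ← Finset.mul_sum, ← Finset.mul_sum,
      sum_lin, sum_quad, sum_quad, h4, htr]
    ring
  rw [hsum, mul_zero]
end

section
/- Let ε ∈ ℝⁿ and Z be a real n × k matrix with ZᵀD_ε²Z invertible; set V := Z(ZᵀD_ε²Z)⁻¹Zᵀ and P := D_ε V D_ε. Then for every index i: V_{ii}(1 − 3P_{ii} + 4P_{ii}²) − 2·Σ_{j=1}^n V_{ij}² ε_j² P_{ij}² ≥ V_{ii}(1 − P_{ii})(1 − 2P_{ii})². In particular, since 0 ≤ P_{ii} ≤ 1 and V_{ii} ≥ 0, the left-hand side is nonnegative. -/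
open Matrix

/-! The identity `V D_ε² V = V` gives `Σⱼ Vᵢⱼ² εⱼ² = Vᵢᵢ` and hence `Σⱼ Pᵢⱼ² = Pᵢᵢ`, so `Pᵢᵢ ≤ 1`.
Writing the sum `Σⱼ Vᵢⱼ² εⱼ² Pᵢⱼ²` as `Σⱼ wⱼ qⱼ` with weights `wⱼ = Vᵢⱼ² εⱼ²` (total `Vᵢᵢ`, diagonal
`Vᵢᵢ Pᵢᵢ`) and values `qⱼ = Pᵢⱼ²` (total `Pᵢᵢ`, diagonal `Pᵢᵢ²`), each off-diagonal value is at most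
the off-diagonal total, so the sum is at most `Vᵢᵢ Pᵢᵢ (1 − 2Pᵢᵢ + 2Pᵢᵢ²)`; the claimed inequality is
exactly this bound after expanding the polynomials in `Pᵢᵢ`. -/

open Finset

theorem Finset.sum_mul_le_sum_mul_sum_of_nonneg {ι R : Type*} [Semiring R] [PartialOrder R]
    [IsOrderedRing R] (s : Finset ι) {w q : ι → R}
    (hw : ∀ j ∈ s, 0 ≤ w j) (hq : ∀ j ∈ s, 0 ≤ q j) :
    ∑ j ∈ s, w j * q j ≤ (∑ j ∈ s, w j) * ∑ j ∈ s, q j := by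
  rw [sum_mul]
  exact sum_le_sum fun j hj => mul_le_mul_of_nonneg_left (single_le_sum hq hj) (hw j hj)

theorem Finset.sum_mul_le_mul_add_sum_erase_mul {ι R : Type*} [Fintype ι] [DecidableEq ι] [Ring R]
    [PartialOrder R] [IsOrderedRing R] {w q : ι → R} (hw : ∀ j, 0 ≤ w j) (hq : ∀ j, 0 ≤ q j) (i : ι) :
    ∑ j, w j * q j ≤ w i * q i + (∑ j, w j - w i) * (∑ j, q j - q i) := by
  simp only [← add_sum_erase univ _ (mem_univ i), add_sub_cancel_left]
  gcongr
  exact sum_mul_le_sum_mul_sum_of_nonneg _ (fun j _ => hw j) fun j _ => hq j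

theorem Matrix.sum_sq_mul_eq_diag {ι R : Type*} [Fintype ι] [DecidableEq ι] [CommRing R]
    {V : Matrix ι ι R} {d : ι → R} (hVt : Vᵀ = V) (hV : V * diagonal d * V = V) (i : ι) :
    ∑ j, V i j ^ 2 * d j = V i i := by
  conv_rhs => rw [← hV]
  rw [mul_apply]
  refine sum_congr rfl fun j _ => ?_
  rw [mul_diagonal, ← transpose_apply V i j, hVt]
  ring

section

variable {n k : ℕ} (ε : Fin n → ℝ) (Z : Matrix (Fin n) (Fin k) ℝ)

theorem Vmat_transpose : (Vmat ε Z)ᵀ = Vmat ε Z := by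
  simp only [Vmat, transpose_mul, transpose_transpose, transpose_nonsing_inv, diagonal_transpose,
    Matrix.mul_assoc]

theorem Vmat_mul_diagonal_mul_Vmat (hinv : IsUnit (Zᵀ * diagonal (fun i => ε i ^ 2) * Z)) :
    Vmat ε Z * diagonal (fun i => ε i ^ 2) * Vmat ε Z = Vmat ε Z := by
  set A := Zᵀ * diagonal (fun i => ε i ^ 2) * Z
  have hA : A⁻¹ * A = 1 := nonsing_inv_mul A ((isUnit_iff_isUnit_det A).mp hinv)
  calc Vmat ε Z * diagonal (fun i => ε i ^ 2) * Vmat ε Z = Z * (A⁻¹ * A) * A⁻¹ * Zᵀ := by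
        simp only [Vmat, A, Matrix.mul_assoc]
    _ = Vmat ε Z := by rw [hA, Matrix.mul_one]; rfl

theorem Pmat_apply (a b : Fin n) : Pmat ε Z a b = ε a * Vmat ε Z a b * ε b := by
  rw [Pmat, mul_diagonal, diagonal_mul]

variable {ε Z} (hinv : IsUnit (Zᵀ * diagonal (fun i => ε i ^ 2) * Z)) (i : Fin n)
include hinv

theorem sum_Vmat_sq_mul_sq : ∑ j, Vmat ε Z i j ^ 2 * ε j ^ 2 = Vmat ε Z i i :=
  sum_sq_mul_eq_diag (Vmat_transpose ε Z) (Vmat_mul_diagonal_mul_Vmat ε Z hinv) i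

theorem sum_Pmat_sq : ∑ j, Pmat ε Z i j ^ 2 = Pmat ε Z i i := by
  calc ∑ j, Pmat ε Z i j ^ 2 = ε i ^ 2 * ∑ j, Vmat ε Z i j ^ 2 * ε j ^ 2 := by
        rw [mul_sum]
        exact sum_congr rfl fun j _ => by rw [Pmat_apply]; ring
    _ = Pmat ε Z i i := by rw [sum_Vmat_sq_mul_sq hinv, Pmat_apply]; ring

theorem Vmat_diag_nonneg : 0 ≤ Vmat ε Z i i :=
  sum_Vmat_sq_mul_sq hinv i ▸ sum_nonneg fun j _ => by positivity

theorem Pmat_diag_le_one : Pmat ε Z i i ≤ 1 := by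
  have h : Pmat ε Z i i ^ 2 ≤ Pmat ε Z i i :=
    sum_Pmat_sq hinv i ▸ single_le_sum (fun j _ => sq_nonneg (Pmat ε Z i j)) (mem_univ i)
  nlinarith

theorem sum_Vmat_sq_mul_sq_mul_Pmat_sq_le :
    ∑ j, Vmat ε Z i j ^ 2 * ε j ^ 2 * Pmat ε Z i j ^ 2
      ≤ Vmat ε Z i i * Pmat ε Z i i * (1 - 2 * Pmat ε Z i i + 2 * Pmat ε Z i i ^ 2) := by
  have h := sum_mul_le_mul_add_sum_erase_mul (w := fun j => Vmat ε Z i j ^ 2 * ε j ^ 2)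
    (q := fun j => Pmat ε Z i j ^ 2) (fun j => by positivity) (fun j => by positivity) i
  have hwi : Vmat ε Z i i ^ 2 * ε i ^ 2 = Vmat ε Z i i * Pmat ε Z i i := by
    rw [Pmat_apply]; ring
  rw [sum_Vmat_sq_mul_sq hinv, sum_Pmat_sq hinv, hwi] at h
  linear_combination h

end

/-- The lower bound `cᵢ ≥ Vᵢᵢ(1 − Pᵢᵢ)(1 − 2Pᵢᵢ)²` used in the proof of Lemma 1:
`Vᵢᵢ(1 − 3Pᵢᵢ + 4Pᵢᵢ²) − 2 Σⱼ Vᵢⱼ² εⱼ² Pᵢⱼ² ≥ Vᵢᵢ(1 − Pᵢᵢ)(1 − 2Pᵢᵢ)² ≥ 0`. -/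
theorem stmt_11 {n k : ℕ} (ε : Fin n → ℝ) (Z : Matrix (Fin n) (Fin k) ℝ)
    (hinv : IsUnit (Zᵀ * Matrix.diagonal (fun i => ε i ^ 2) * Z)) (i : Fin n) :
    Vmat ε Z i i * (1 - 3 * Pmat ε Z i i + 4 * (Pmat ε Z i i) ^ 2)
        - 2 * ∑ j, (Vmat ε Z i j) ^ 2 * (ε j) ^ 2 * (Pmat ε Z i j) ^ 2
      ≥ Vmat ε Z i i * (1 - Pmat ε Z i i) * (1 - 2 * Pmat ε Z i i) ^ 2 ∧
    0 ≤ Vmat ε Z i i * (1 - 3 * Pmat ε Z i i + 4 * (Pmat ε Z i i) ^ 2)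
        - 2 * ∑ j, (Vmat ε Z i j) ^ 2 * (ε j) ^ 2 * (Pmat ε Z i j) ^ 2 := by
  have hbound : Vmat ε Z i i * (1 - 3 * Pmat ε Z i i + 4 * (Pmat ε Z i i) ^ 2)
        - 2 * ∑ j, (Vmat ε Z i j) ^ 2 * (ε j) ^ 2 * (Pmat ε Z i j) ^ 2
      ≥ Vmat ε Z i i * (1 - Pmat ε Z i i) * (1 - 2 * Pmat ε Z i i) ^ 2 := by
    linear_combination 2 * sum_Vmat_sq_mul_sq_mul_Pmat_sq_le hinv i
  have hrhs : 0 ≤ Vmat ε Z i i * (1 - Pmat ε Z i i) * (1 - 2 * Pmat ε Z i i) ^ 2 :=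
    mul_nonneg (mul_nonneg (Vmat_diag_nonneg hinv i) (sub_nonneg.2 (Pmat_diag_le_one hinv i))) (sq_nonneg _)
  exact ⟨hbound, hrhs.trans hbound⟩
end

section
/- Let p, q, s be real numbers with p ≥ 0, q ≥ 0, s² ≤ pq, and set x := p + q. If 0 < x < 3/4, then (pq + s²)(3 − 4x) − 2x + 2x² ≤ −(4x² − 5x + 2)·x < 0. -/
/-- First off-diagonal case in the proof of Lemma 1: for `p, q ≥ 0`, `s² ≤ pq` and
`x = p + q ∈ (0, 3/4)`, the weight `(pq + s²)(3 − 4x) − 2x + 2x²` is bounded above by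
`−(4x² − 5x + 2)x`, which is strictly negative. -/
theorem stmt_12 (p q s x : ℝ) (hp : 0 ≤ p) (hq : 0 ≤ q) (hs : s ^ 2 ≤ p * q)
    (hx : x = p + q) (hx0 : 0 < x) (hx34 : x < 3 / 4) :
    (p * q + s ^ 2) * (3 - 4 * x) - 2 * x + 2 * x ^ 2 ≤ -(4 * x ^ 2 - 5 * x + 2) * x ∧
    -(4 * x ^ 2 - 5 * x + 2) * x < 0 := by
  subst hx
  constructor
  · nlinarith [sq_nonneg (p - q), sq_nonneg (p + q), mul_nonneg hp hq]
  · nlinarith [sq_nonneg (8 * (p + q) - 5)]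
end

section
/- Let c* := (3 + 2√2 + √3·√(4√2 − 5))/8 (≈ 0.904). Let p, q, s be real numbers with 0 ≤ p ≤ c*, 0 ≤ q ≤ c*, and set x := p + q. If x ≥ 3/4, then (pq + s²)(3 − 4x) − 2x + 2x² ≤ pq(3 − 4x) − 2x + 2x² ≤ 0. -/
/-- Second off-diagonal case in the proof of Lemma 1: with
`c* = (3 + 2√2 + √3·√(4√2 − 5))/8 ≈ 0.904`, if `0 ≤ p, q ≤ c*` and `x = p + q ≥ 3/4`, then
`(pq + s²)(3 − 4x) − 2x + 2x² ≤ pq(3 − 4x) − 2x + 2x² ≤ 0`. -/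
theorem stmt_13 (p q s x : ℝ)
    (hp0 : 0 ≤ p)
    (hp1 : p ≤ (3 + 2 * Real.sqrt 2 + Real.sqrt 3 * Real.sqrt (4 * Real.sqrt 2 - 5)) / 8)
    (hq0 : 0 ≤ q)
    (hq1 : q ≤ (3 + 2 * Real.sqrt 2 + Real.sqrt 3 * Real.sqrt (4 * Real.sqrt 2 - 5)) / 8)
    (hx : x = p + q) (hx34 : 3 / 4 ≤ x) :
    (p * q + s ^ 2) * (3 - 4 * x) - 2 * x + 2 * x ^ 2
        ≤ p * q * (3 - 4 * x) - 2 * x + 2 * x ^ 2 ∧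
    p * q * (3 - 4 * x) - 2 * x + 2 * x ^ 2 ≤ 0 := by
  set A : ℝ := Real.sqrt 2 with hAdef
  have hA : A ^ 2 = 2 := Real.sq_sqrt (by norm_num)
  have hAnn : 0 ≤ A := Real.sqrt_nonneg 2
  have hA54 : (5/4 : ℝ) ≤ A := by nlinarith
  set B : ℝ := Real.sqrt (4 * A - 5) with hBdef
  have hBnn : 0 ≤ B := Real.sqrt_nonneg _
  have hB : B ^ 2 = 4 * A - 5 := Real.sq_sqrt (by linarith)
  have h3 : (Real.sqrt 3) ^ 2 = 3 := Real.sq_sqrt (by norm_num)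
  have h3nn : 0 ≤ Real.sqrt 3 := Real.sqrt_nonneg 3
  set R : ℝ := Real.sqrt 3 * B with hRdef
  have hRnn : 0 ≤ R := mul_nonneg h3nn hBnn
  have hR : R ^ 2 = 12 * A - 15 := by
    rw [hRdef, mul_pow, h3, hB]; ring
  set c : ℝ := (3 + 2 * A + R) / 8 with hcdef
  have hD : 16 * c ^ 4 - 24 * c ^ 3 + 17 * c ^ 2 - 12 * c + 4 = 0 := by
    rw [hcdef]
    linear_combination ((-1:ℝ)/2 + 3/8 * R + 9/8 * A + 1/8 * A * R + 1/16 * A^2) * hA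
      + ((-1:ℝ)/256 + 1/256 * R^2 + 3/64 * A + 1/32 * A * R + 3/32 * A^2) * hR
  have hc2 : (0:ℝ) < 4 * c - 2 := by rw [hcdef]; linarith
  have hpc : p ≤ c := hp1
  have hqc : q ≤ c := hq1
  have h1 : 0 ≤ (c - p) * (c - q) * (4 * x - 3) := by
    apply mul_nonneg (mul_nonneg (by linarith) (by linarith)) (by linarith)
  have h2 : 0 ≤ (4 * c - 2) * x ^ 2 - (4 * c ^ 2 + 3 * c - 2) * x + 3 * c ^ 2 := by
    nlinarith [sq_nonneg (2 * (4 * c - 2) * x - (4 * c ^ 2 + 3 * c - 2)), hD, hc2]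
  constructor
  · nlinarith [sq_nonneg s]
  · have key : p * q * (3 - 4 * x) - 2 * x + 2 * x ^ 2
        = -((c - p) * (c - q) * (4 * x - 3))
          - ((4 * c - 2) * x ^ 2 - (4 * c ^ 2 + 3 * c - 2) * x + 3 * c ^ 2) := by
      subst hx; ring
    linarith [h1, h2, key.le]
end

section
/- Let ε ∈ ℝⁿ and Z be a real n × k matrix with ZᵀD_ε²Z invertible; set V := Z(ZᵀD_ε²Z)⁻¹Zᵀ and P := D_ε V D_ε. Then for every index i: V_{ii}P_{ii}(1 − 2P_{ii}) + Σ_{j=1}^n V_{ij}² ε_j² P_{ij}² ≥ V_{ii} P_{ii} (1 − P_{ii})² ≥ 0. Equivalently, the diagonal entries (V∘W)_{ii} = −2V_{ii}P_{ii}(1 − 2P_{ii}) − 2Σ_{j=1}^n V_{ij}²ε_j²P_{ij}² of the paper's matrix V∘W satisfy (V∘W)_{ii} ≤ −2V_{ii}P_{ii}(1 − P_{ii})² ≤ 0. -/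
open Matrix

/-- Nonpositivity of the diagonal entries of `V∘W`:
`Vᵢᵢ Pᵢᵢ(1 − 2Pᵢᵢ) + Σⱼ Vᵢⱼ² εⱼ² Pᵢⱼ² ≥ Vᵢᵢ Pᵢᵢ (1 − Pᵢᵢ)² ≥ 0`, equivalently
`(V∘W)ᵢᵢ = −2Vᵢᵢ Pᵢᵢ(1 − 2Pᵢᵢ) − 2Σⱼ Vᵢⱼ² εⱼ² Pᵢⱼ² ≤ −2Vᵢᵢ Pᵢᵢ(1 − Pᵢᵢ)² ≤ 0`. -/
theorem stmt_14 {n k : ℕ} (ε : Fin n → ℝ) (Z : Matrix (Fin n) (Fin k) ℝ)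
    (hinv : IsUnit (Zᵀ * Matrix.diagonal (fun i => ε i ^ 2) * Z)) (i : Fin n) :
    (Vmat ε Z i i * Pmat ε Z i i * (1 - 2 * Pmat ε Z i i)
        + ∑ j, (Vmat ε Z i j) ^ 2 * (ε j) ^ 2 * (Pmat ε Z i j) ^ 2
      ≥ Vmat ε Z i i * Pmat ε Z i i * (1 - Pmat ε Z i i) ^ 2) ∧
    (0 ≤ Vmat ε Z i i * Pmat ε Z i i * (1 - Pmat ε Z i i) ^ 2) ∧
    (-2 * Vmat ε Z i i * Pmat ε Z i i * (1 - 2 * Pmat ε Z i i)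
        - 2 * ∑ j, (Vmat ε Z i j) ^ 2 * (ε j) ^ 2 * (Pmat ε Z i j) ^ 2
      ≤ -2 * (Vmat ε Z i i * Pmat ε Z i i * (1 - Pmat ε Z i i) ^ 2)) ∧
    (-2 * (Vmat ε Z i i * Pmat ε Z i i * (1 - Pmat ε Z i i) ^ 2) ≤ 0) := by
  have hP : ∀ a b, Pmat ε Z a b = ε a * Vmat ε Z a b * ε b := by
    intro a b
    simp [Pmat, Matrix.diagonal_mul, Matrix.mul_diagonal]
  have hVP : Vmat ε Z i i * Pmat ε Z i i = (Vmat ε Z i i) ^ 2 * (ε i) ^ 2 := by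
    rw [hP]; ring
  have hnonneg : 0 ≤ Vmat ε Z i i * Pmat ε Z i i := by rw [hVP]; positivity
  have hterm : (Vmat ε Z i i) ^ 2 * (ε i) ^ 2 * (Pmat ε Z i i) ^ 2
      ≤ ∑ j, (Vmat ε Z i j) ^ 2 * (ε j) ^ 2 * (Pmat ε Z i j) ^ 2 := by
    apply Finset.single_le_sum (f := fun j => (Vmat ε Z i j) ^ 2 * (ε j) ^ 2 * (Pmat ε Z i j) ^ 2)
    · intro j _; positivity
    · exact Finset.mem_univ i
  have h1 : Vmat ε Z i i * Pmat ε Z i i * (1 - 2 * Pmat ε Z i i)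
      + ∑ j, (Vmat ε Z i j) ^ 2 * (ε j) ^ 2 * (Pmat ε Z i j) ^ 2
      ≥ Vmat ε Z i i * Pmat ε Z i i * (1 - Pmat ε Z i i) ^ 2 := by
    nlinarith [hterm, hVP]
  have h2 : 0 ≤ Vmat ε Z i i * Pmat ε Z i i * (1 - Pmat ε Z i i) ^ 2 := by positivity
  exact ⟨h1, h2, by linarith, by linarith⟩
end
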